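/- arXiv:2502.18896 — 4 statements merged into one kernel-verified Lean document; each statement's English description precedes it below -/
import Mathlib

section
/- Let μ be a Borel probability measure on ℝ^d and ν a finite Borel measure supported in {x : d(x,μ) ≤ δ}. If Re(s) > D, where D is the relative upper box dimension of μ with respect to ν, then the integral ∫ d(x,μ)^{s-d} dν(x) converges absolutely. -/
/-!
For `α = Re s - d ≥ 0` the integrand is bounded by `δ ^ α` on the support of `ν`. For `α < 0`
pick `s₀ < Re s` with vanishing Minkowski content, so that `ν {d(·, μ) ≤ r} ≤ r ^ (d - s₀)` for
all `r ≤ r₀`. On the dyadic shell `r₀ / 2 ^ (n + 1) < d(x, μ) ≤ r₀ / 2 ^ n` the integrand is at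
most `(r₀ / 2 ^ (n + 1)) ^ α`, so the integral is dominated by a geometric series of ratio
`2 ^ (s₀ - Re s) < 1`.
-/

open MeasureTheory Filter Topology
open scoped ENNReal

def msupport {X : Type*} [TopologicalSpace X] [MeasurableSpace X] (μ : Measure X) : Set X :=
  {x | ∀ U ∈ nhds x, μ U ≠ 0}

noncomputable def distM {X : Type*} [MetricSpace X] [MeasurableSpace X] (x : X)
    (μ : Measure X) : ℝ := Metric.infDist x (msupport μ)

/-- The relative upper `s`-dimensional Minkowski content of `μ` with respect to `ν`
in ambient dimension `d`. -/
noncomputable def upperContent {X : Type*} [MetricSpace X] [MeasurableSpace X]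
    (d : ℕ) (μ ν : Measure X) (s : ℝ) : ℝ≥0∞ :=
  Filter.limsup (fun δ : ℝ => ENNReal.ofReal (δ ^ (s - d)) * ν {x | distM x μ ≤ δ})
    (𝓝[>] (0 : ℝ))

/-- The relative upper box (Minkowski) dimension of `μ` with respect to `ν`. -/
noncomputable def upperBoxDim {X : Type*} [MetricSpace X] [MeasurableSpace X]
    (d : ℕ) (μ ν : Measure X) : ℝ :=
  sInf {s : ℝ | 0 ≤ s ∧ upperContent d μ ν s = 0}

open Set

section Support

variable {X : Type*} [TopologicalSpace X] [MeasurableSpace X] [SecondCountableTopology X]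

lemma measure_compl_msupport (ν : Measure X) : ν (msupport ν)ᶜ = 0 := by
  refine measure_null_of_locally_null _ fun x hx => ?_
  simp only [msupport, mem_compl_iff, mem_ofPred_eq, not_forall, not_not] at hx
  obtain ⟨U, hU, hU0⟩ := hx
  exact ⟨U, mem_nhdsWithin_of_mem_nhds hU, hU0⟩

lemma ae_mem_of_msupport_subset {ν : Measure X} {s : Set X} (h : msupport ν ⊆ s) :
    ∀ᵐ x ∂ν, x ∈ s :=
  measure_mono_null (compl_subset_compl.mpr h) (measure_compl_msupport ν)

end Support

section Dyadic

lemma div_two_pow_rpow {r : ℝ} (hr : 0 ≤ r) (γ : ℝ) (n : ℕ) :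
    (r / 2 ^ n) ^ γ = r ^ γ * ((2 : ℝ) ^ (-γ)) ^ n := by
  rw [Real.div_rpow hr (by positivity), Real.rpow_neg zero_le_two, inv_pow,
    Real.rpow_pow_comm zero_le_two, div_eq_mul_inv]

noncomputable def dyadicLayer (r₀ α : ℝ) (n : ℕ) : ℝ → ℝ≥0∞ :=
  (Iic (r₀ / 2 ^ n)).indicator fun _ => ENNReal.ofReal ((r₀ / 2 ^ (n + 1)) ^ α)

lemma measurable_dyadicLayer (r₀ α : ℝ) (n : ℕ) : Measurable (dyadicLayer r₀ α n) :=
  measurable_const.indicator measurableSet_Iic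

-- At `x = 0` this relies on the convention `0 ^ α = 0` for `α ≠ 0`.
lemma ofReal_rpow_le_add_tsum_dyadicLayer {x r₀ α : ℝ} (hx : 0 ≤ x) (hr₀ : 0 < r₀)
    (hα : α < 0) :
    ENNReal.ofReal (x ^ α) ≤ ENNReal.ofReal (r₀ ^ α) + ∑' n, dyadicLayer r₀ α n x := by
  rcases hx.eq_or_lt with rfl | hx0
  · simp [Real.zero_rpow hα.ne]
  rcases le_or_gt x r₀ with hxr | hrx
  · obtain ⟨n, hn, hn'⟩ := exists_nat_pow_near ((one_le_div hx0).mpr hxr) one_lt_two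
    have hle : x ≤ r₀ / 2 ^ n := (le_div_iff₀' (by positivity)).mpr ((le_div_iff₀ hx0).mp hn)
    have hlt : r₀ / 2 ^ (n + 1) < x :=
      (div_lt_iff₀' (by positivity)).mpr ((div_lt_iff₀ hx0).mp hn')
    calc ENNReal.ofReal (x ^ α)
        ≤ ENNReal.ofReal ((r₀ / 2 ^ (n + 1)) ^ α) :=
          ENNReal.ofReal_le_ofReal (Real.rpow_le_rpow_of_nonpos (by positivity) hlt.le hα.le)
      _ = dyadicLayer r₀ α n x := by rw [dyadicLayer, indicator_of_mem (mem_Iic.mpr hle)]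
      _ ≤ ∑' n, dyadicLayer r₀ α n x := ENNReal.le_tsum n
      _ ≤ _ := le_add_self
  · exact le_add_right
      (ENNReal.ofReal_le_ofReal (Real.rpow_le_rpow_of_nonpos hr₀ hrx.le hα.le))

variable {X : Type*} [MeasurableSpace X] {ν : Measure X} {f : X → ℝ}
  {α β r₀ : ℝ}

lemma lintegral_dyadicLayer_comp_le (hf : Measurable f) (hr₀ : 0 < r₀)
    (hν : ∀ r ∈ Ioc 0 r₀, ν {x | f x ≤ r} ≤ ENNReal.ofReal (r ^ β)) (n : ℕ) :
    ∫⁻ x, dyadicLayer r₀ α n (f x) ∂ν ≤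
      ENNReal.ofReal ((r₀ / 2 ^ (n + 1)) ^ α * (r₀ / 2 ^ n) ^ β) := by
  rw [dyadicLayer, lintegral_indicator_const_comp hf measurableSet_Iic,
    ENNReal.ofReal_mul (by positivity)]
  exact mul_le_mul_right (hν _ ⟨by positivity, div_le_self hr₀.le (one_le_pow₀ one_le_two)⟩) _

lemma summable_dyadic_rpow_mul_rpow (hr₀ : 0 < r₀) (hαβ : 0 < α + β) :
    Summable fun n : ℕ => (r₀ / 2 ^ (n + 1)) ^ α * (r₀ / 2 ^ n) ^ β := by
  have hq : (2 : ℝ) ^ (-α) * 2 ^ (-β) < 1 := by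
    rw [← Real.rpow_add two_pos]
    exact Real.rpow_lt_one_of_one_lt_of_neg one_lt_two (by linarith)
  refine ((summable_geometric_of_lt_one (by positivity) hq).mul_left
    (r₀ ^ α * 2 ^ (-α) * r₀ ^ β)).congr fun n => ?_
  simp only [div_two_pow_rpow hr₀.le]
  ring

theorem lintegral_rpow_lt_top_of_measure_le_rpow [IsFiniteMeasure ν] (hf : Measurable f)
    (hf0 : ∀ x, 0 ≤ f x) (hα : α < 0) (hαβ : 0 < α + β) (hr₀ : 0 < r₀)
    (hν : ∀ r ∈ Ioc 0 r₀, ν {x | f x ≤ r} ≤ ENNReal.ofReal (r ^ β)) :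
    ∫⁻ x, ENNReal.ofReal (f x ^ α) ∂ν < ∞ :=
  calc ∫⁻ x, ENNReal.ofReal (f x ^ α) ∂ν
      ≤ ∫⁻ x, ENNReal.ofReal (r₀ ^ α) + ∑' n, dyadicLayer r₀ α n (f x) ∂ν :=
        lintegral_mono fun x => ofReal_rpow_le_add_tsum_dyadicLayer (hf0 x) hr₀ hα
    _ = ENNReal.ofReal (r₀ ^ α) * ν univ + ∑' n, ∫⁻ x, dyadicLayer r₀ α n (f x) ∂ν := by
        rw [lintegral_add_left measurable_const, lintegral_const,
          lintegral_tsum (f := fun n x => dyadicLayer r₀ α n (f x))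
            fun n => ((measurable_dyadicLayer r₀ α n).comp hf).aemeasurable]
    _ ≤ ENNReal.ofReal (r₀ ^ α) * ν univ +
          ∑' n : ℕ, ENNReal.ofReal ((r₀ / 2 ^ (n + 1)) ^ α * (r₀ / 2 ^ n) ^ β) := by
        gcongr with n
        exact lintegral_dyadicLayer_comp_le hf hr₀ hν n
    _ < ∞ := ENNReal.add_lt_top.mpr
        ⟨ENNReal.mul_lt_top ENNReal.ofReal_lt_top (measure_lt_top ν _),
          (summable_dyadic_rpow_mul_rpow hr₀ hαβ).tsum_ofReal_ne_top.lt_top⟩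

theorem integrable_rpow_of_measure_le_rpow [IsFiniteMeasure ν] (hf : Measurable f)
    (hf0 : ∀ x, 0 ≤ f x) (hα : α < 0) (hαβ : 0 < α + β) (hr₀ : 0 < r₀)
    (hν : ∀ r ∈ Ioc 0 r₀, ν {x | f x ≤ r} ≤ ENNReal.ofReal (r ^ β)) :
    Integrable (fun x => f x ^ α) ν :=
  ⟨(hf.pow_const α).aestronglyMeasurable,
    (hasFiniteIntegral_iff_ofReal (ae_of_all _ fun x => Real.rpow_nonneg (hf0 x) α)).mpr
      (lintegral_rpow_lt_top_of_measure_le_rpow hf hf0 hα hαβ hr₀ hν)⟩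

end Dyadic

section BoxDimension

variable {X : Type*} [MetricSpace X] [MeasurableSpace X] {d : ℕ} {μ ν : Measure X}

lemma upperContent_eq_zero_of_lt [IsFiniteMeasure ν] {s : ℝ} (hs : (d : ℝ) < s) :
    upperContent d μ ν s = 0 := by
  have hpow : Tendsto (fun r : ℝ => ENNReal.ofReal (r ^ (s - d))) (𝓝[>] 0) (𝓝 0) := by
    have h := (Real.continuousAt_rpow_const 0 (s - d) (Or.inr (by linarith))).tendsto.mono_left
      (nhdsWithin_le_nhds (s := Ioi 0))
    simpa [Function.comp_def, Real.zero_rpow (by linarith : s - d ≠ 0)] using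
      (ENNReal.continuous_ofReal.tendsto _).comp h
  have hbound := ENNReal.Tendsto.mul_const hpow (Or.inr (measure_ne_top ν univ))
  rw [zero_mul] at hbound
  exact (tendsto_of_tendsto_of_tendsto_of_le_of_le tendsto_const_nhds hbound
    (fun _ => bot_le) fun _ => mul_le_mul_right (measure_mono (subset_univ _)) _).limsup_eq

lemma exists_upperContent_eq_zero_of_upperBoxDim_lt [IsFiniteMeasure ν] {t : ℝ}
    (ht : upperBoxDim d μ ν < t) : ∃ s < t, upperContent d μ ν s = 0 := by
  have hne : ((d : ℝ) + 1) ∈ {s : ℝ | 0 ≤ s ∧ upperContent d μ ν s = 0} :=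
    ⟨by positivity, upperContent_eq_zero_of_lt (lt_add_one _)⟩
  obtain ⟨s, ⟨-, hs⟩, hst⟩ := (csInf_lt_iff ⟨0, fun _ h => h.1⟩ ⟨_, hne⟩).mp ht
  exact ⟨s, hst, hs⟩

lemma exists_measure_distM_le_rpow {s : ℝ} (hs : upperContent d μ ν s = 0) :
    ∃ r₀ > 0, ∀ r ∈ Ioc 0 r₀,
      ν {x | distM x μ ≤ r} ≤ ENNReal.ofReal (r ^ ((d : ℝ) - s)) := by
  have hev : ∀ᶠ r in 𝓝[>] (0 : ℝ),
      ENNReal.ofReal (r ^ (s - d)) * ν {x | distM x μ ≤ r} < 1 :=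
    eventually_lt_of_limsup_lt (hs.trans_lt zero_lt_one)
  obtain ⟨r₀, hr₀, hsub⟩ := mem_nhdsGT_iff_exists_Ioc_subset.mp hev
  refine ⟨r₀, hr₀, fun r hr => ?_⟩
  have hpos : 0 < r ^ (s - d) := Real.rpow_pos_of_pos hr.1 _
  rw [← neg_sub, Real.rpow_neg hr.1.le, ENNReal.ofReal_inv_of_pos hpos,
    ENNReal.le_inv_iff_mul_le, mul_comm]
  exact (hsub hr).le

end BoxDimension

theorem zeta_integrable_above_upper_box_dim_general
    (d : ℕ) (μ ν : Measure (EuclideanSpace ℝ (Fin d)))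
    [IsFiniteMeasure ν]
    (δ : ℝ)
    (hspt : msupport ν ⊆ {x | distM x μ ≤ δ})
    (s : ℂ) (hs : upperBoxDim d μ ν < s.re) :
    Integrable (fun x => (distM x μ) ^ (s.re - d)) ν := by
  have hdist : Measurable fun x => distM x μ := (Metric.continuous_infDist_pt _).measurable
  have hdist0 : ∀ x, 0 ≤ distM x μ := fun _ => Metric.infDist_nonneg
  rcases le_or_gt 0 (s.re - d) with hα | hα
  · refine Integrable.of_bound (hdist.pow_const _).aestronglyMeasurable (δ ^ (s.re - d)) ?_
    filter_upwards [ae_mem_of_msupport_subset hspt] with x hx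
    rw [Real.norm_of_nonneg (Real.rpow_nonneg (hdist0 x) _)]
    exact Real.rpow_le_rpow (hdist0 x) hx hα
  · obtain ⟨s₀, hs₀, hcontent⟩ := exists_upperContent_eq_zero_of_upperBoxDim_lt hs
    obtain ⟨r₀, hr₀, hν⟩ := exists_measure_distM_le_rpow hcontent
    exact integrable_rpow_of_measure_le_rpow hdist hdist0 hα (by linarith) hr₀ hν

theorem zeta_integrable_above_upper_box_dim
    (d : ℕ) (μ ν : Measure (EuclideanSpace ℝ (Fin d)))
    [IsProbabilityMeasure μ] [IsFiniteMeasure ν]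
    (δ : ℝ) (hδ : 0 < δ)
    (hspt : msupport ν ⊆ {x | distM x μ ≤ δ})
    (s : ℂ) (hs : upperBoxDim d μ ν < s.re) :
    Integrable (fun x => (distM x μ) ^ (s.re - d)) ν :=
  zeta_integrable_above_upper_box_dim_general d μ ν δ hspt s hs
end

section
/- Let μ be a Borel probability measure on ℝ^d with relative box dimension D := dim_B(μ, ν) with respect to a finite Borel measure ν supported in a tubular neighborhood of spt(μ), where D < d. If the relative lower D-dimensional Minkowski content M^D_*(μ, ν) is strictly positive, then the relative distance zeta function ζ_μ(s, ν) = ∫ d(x,μ)^{s-d} dν(x) tends to +∞ as real s → D+. -/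
open MeasureTheory Filter Topology
open scoped ENNReal

noncomputable def lowerContent {X : Type*} [MetricSpace X] [MeasurableSpace X]
    (d : ℕ) (μ ν : Measure X) (s : ℝ) : ℝ≥0∞ :=
  Filter.liminf (fun δ : ℝ => ENNReal.ofReal (δ ^ (s - d)) * ν {x | distM x μ ≤ δ})
    (𝓝[>] (0 : ℝ))

noncomputable def lowerBoxDim {X : Type*} [MetricSpace X] [MeasurableSpace X]
    (d : ℕ) (μ ν : Measure X) : ℝ :=
  sInf {s : ℝ | 0 ≤ s ∧ lowerContent d μ ν s = 0}

/-!
With `φ = d(·, μ)` and `a = d - s > 0`, the layer-cake formula reads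
`∫ φ ^ (-a) dν = a ∫_0^∞ ν {0 < φ < 1/t} t ^ (a - 1) dt`.
For `a < d - D` the vanishing of the upper contents above `D` gives `ν {φ ≤ r} ≤ r ^ b` near `0`
for some `b > a`, so the integral is finite; the positive lower content gives
`ν {φ ≤ r} ≥ c r ^ (d - D)`, so the integral is at least `a c' r₀ ^ (d - D - a) / (d - D - a)`,
which blows up as `a → d - D`.
-/

open Set

section NegativeMoments

variable {X : Type*} [MeasurableSpace X] {ν : Measure X} {φ : X → ℝ}

lemma lintegral_rpow_neg_eq_lintegral_meas_lt_mul (hφ : 0 ≤ φ) (hφm : Measurable φ) {a : ℝ}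
    (ha : 0 < a) :
    ∫⁻ x, ENNReal.ofReal (φ x ^ (-a)) ∂ν =
      ENNReal.ofReal a *
        ∫⁻ t in Ioi 0, ν {x | 0 < φ x ∧ φ x < t⁻¹} * ENNReal.ofReal (t ^ (a - 1)) := by
  simp_rw [Real.rpow_neg (hφ _), ← Real.inv_rpow (hφ _)]
  rw [lintegral_rpow_eq_lintegral_meas_lt_mul ν (ae_of_all _ fun x => inv_nonneg.2 (hφ x))
    hφm.inv.aemeasurable ha]
  congr 1
  refine setLIntegral_congr_fun measurableSet_Ioi fun t (ht : 0 < t) => ?_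
  congr 2
  ext x
  refine ⟨fun h => ?_, fun ⟨hx, h⟩ => (lt_inv_comm₀ ht hx).2 h⟩
  have hx : 0 < φ x := inv_pos.1 (ht.trans h)
  exact ⟨hx, (lt_inv_comm₀ ht hx).1 h⟩

lemma integrable_rpow_neg_of_eventually_measure_le [IsFiniteMeasure ν] (hφ : 0 ≤ φ)
    (hφm : Measurable φ) {a b : ℝ} (ha : 0 < a) (hab : a < b)
    (hV : ∀ᶠ r in 𝓝[>] 0, ν {x | φ x ≤ r} ≤ ENNReal.ofReal (r ^ b)) :
    Integrable (fun x => φ x ^ (-a)) ν := by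
  obtain ⟨r₁, hr₁, hV⟩ := mem_nhdsGT_iff_exists_Ioc_subset.1 hV
  have hT : 0 < r₁⁻¹ := inv_pos.2 hr₁
  refine ⟨(hφm.pow_const _).aestronglyMeasurable, (hasFiniteIntegral_iff_ofReal
    (ae_of_all _ fun x => Real.rpow_nonneg (hφ x) _)).2 ?_⟩
  rw [lintegral_rpow_neg_eq_lintegral_meas_lt_mul hφ hφm ha, ← Ioc_union_Ioi_eq_Ioi hT.le,
    lintegral_union measurableSet_Ioi Ioc_disjoint_Ioi_same]
  refine ENNReal.mul_lt_top ENNReal.ofReal_lt_top (ENNReal.add_lt_top.2 ⟨?_, ?_⟩)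
  · have hint : IntegrableOn (fun t : ℝ => ν.real univ * t ^ (a - 1)) (Ioc 0 r₁⁻¹) :=
      ((intervalIntegrable_iff_integrableOn_Ioc_of_le hT.le).1
        (intervalIntegral.intervalIntegrable_rpow' (by linarith))).const_mul _
    refine lt_of_le_of_lt (setLIntegral_mono' measurableSet_Ioc fun t ht => ?_)
      hint.lintegral_lt_top
    rw [ENNReal.ofReal_mul measureReal_nonneg, ofReal_measureReal]
    gcongr
    exact subset_univ _
  · have hint : IntegrableOn (fun t : ℝ => t ^ (a - 1 - b)) (Ioi r₁⁻¹) :=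
      integrableOn_Ioi_rpow_of_lt (by linarith) hT
    refine lt_of_le_of_lt (setLIntegral_mono' measurableSet_Ioi fun t (ht : r₁⁻¹ < t) => ?_)
      hint.lintegral_lt_top
    have ht0 : 0 < t := hT.trans ht
    have hmem : t⁻¹ ∈ Ioc 0 r₁ := ⟨inv_pos.2 ht0, (inv_lt_comm₀ hr₁ ht0).1 ht |>.le⟩
    calc ν {x | 0 < φ x ∧ φ x < t⁻¹} * ENNReal.ofReal (t ^ (a - 1))
        ≤ ENNReal.ofReal (t⁻¹ ^ b) * ENNReal.ofReal (t ^ (a - 1)) := by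
          gcongr
          exact (measure_mono fun x (hx : _ ∧ _) => hx.2.le).trans (hV hmem)
      _ = ENNReal.ofReal (t ^ (a - 1 - b)) := by
          rw [← ENNReal.ofReal_mul (by positivity), Real.inv_rpow ht0.le, ← Real.rpow_neg ht0.le,
            ← Real.rpow_add ht0, sub_eq_neg_add (a - 1)]

lemma ofReal_le_lintegral_rpow_neg (hφ : 0 ≤ φ) (hφm : Measurable φ) {a β c r₀ : ℝ}
    (ha : 0 < a) (haβ : a < β) (hc : 0 ≤ c) (hr₀ : 0 < r₀)
    (hV : ∀ r ∈ Ioc 0 r₀, ENNReal.ofReal (c * r ^ β) ≤ ν {x | 0 < φ x ∧ φ x < r}) :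
    ENNReal.ofReal (a * c * r₀ ^ (β - a) / (β - a)) ≤ ∫⁻ x, ENNReal.ofReal (φ x ^ (-a)) ∂ν := by
  have hT : 0 < r₀⁻¹ := inv_pos.2 hr₀
  have hexp : a - β - 1 < -1 := by linarith
  have hint : IntegrableOn (fun t : ℝ => c * t ^ (a - β - 1)) (Ioi r₀⁻¹) :=
    (integrableOn_Ioi_rpow_of_lt hexp hT).const_mul c
  have hval : ∫ t in Ioi r₀⁻¹, c * t ^ (a - β - 1) = c * r₀ ^ (β - a) / (β - a) := by
    rw [integral_const_mul, integral_Ioi_rpow_of_lt hexp hT,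
      show a - β - 1 + 1 = -(β - a) by ring, Real.inv_rpow hr₀.le, Real.rpow_neg hr₀.le, inv_inv,
      div_neg]
    ring
  rw [lintegral_rpow_neg_eq_lintegral_meas_lt_mul hφ hφm ha, mul_assoc, mul_div_assoc,
    ENNReal.ofReal_mul ha.le, ← hval,
    ofReal_integral_eq_lintegral_ofReal hint
      (ae_restrict_of_forall_mem measurableSet_Ioi fun t (ht : r₀⁻¹ < t) => by
        have := hT.trans ht; positivity)]
  gcongr ENNReal.ofReal a * ?_
  refine (setLIntegral_mono' measurableSet_Ioi fun t (ht : r₀⁻¹ < t) => ?_).trans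
    (lintegral_mono_set (Ioi_subset_Ioi hT.le))
  have ht0 : 0 < t := hT.trans ht
  have hmem : t⁻¹ ∈ Ioc 0 r₀ := ⟨inv_pos.2 ht0, (inv_lt_comm₀ hr₀ ht0).1 ht |>.le⟩
  calc ENNReal.ofReal (c * t ^ (a - β - 1))
      = ENNReal.ofReal (c * t⁻¹ ^ β) * ENNReal.ofReal (t ^ (a - 1)) := by
        rw [← ENNReal.ofReal_mul (by positivity), Real.inv_rpow ht0.le, ← Real.rpow_neg ht0.le,
          mul_assoc, ← Real.rpow_add ht0]
        ring_nf
    _ ≤ ν {x | 0 < φ x ∧ φ x < t⁻¹} * ENNReal.ofReal (t ^ (a - 1)) := by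
        gcongr
        exact hV _ hmem

lemma measure_setOf_nonpos_eq_zero_of_eventually_le_rpow {b : ℝ} (hb : 0 < b)
    (hV : ∀ᶠ r in 𝓝[>] 0, ν {x | φ x ≤ r} ≤ ENNReal.ofReal (r ^ b)) :
    ν {x | φ x ≤ 0} = 0 := by
  have hlim : Tendsto (fun r : ℝ => ENNReal.ofReal (r ^ b)) (𝓝[>] 0) (𝓝 0) := by
    have h := (Real.continuousAt_rpow_const 0 b (Or.inr hb.le)).tendsto.mono_left
      (nhdsWithin_le_nhds (s := Ioi 0))
    rw [Real.zero_rpow hb.ne'] at h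
    simpa using ENNReal.tendsto_ofReal h
  refine nonpos_iff_eq_zero.1 (ge_of_tendsto hlim ?_)
  filter_upwards [hV, self_mem_nhdsWithin] with r hr (hr0 : 0 < r)
  exact (measure_mono fun x (hx : φ x ≤ 0) => hx.trans hr0.le).trans hr

lemma exists_ofReal_mul_rpow_le_measure_pos_lt (hnull : ν {x | φ x ≤ 0} = 0) {c β : ℝ}
    (hc : 0 < c) (h : ∀ᶠ r in 𝓝[>] 0, ENNReal.ofReal (c * r ^ β) ≤ ν {x | φ x ≤ r}) :
    ∃ c' > 0, ∃ r₀ > 0, ∀ r ∈ Ioc 0 r₀,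
      ENNReal.ofReal (c' * r ^ β) ≤ ν {x | 0 < φ x ∧ φ x < r} := by
  obtain ⟨r₀, hr₀, h⟩ := mem_nhdsGT_iff_exists_Ioc_subset.1 h
  refine ⟨c * 2⁻¹ ^ β, by positivity, r₀, hr₀, fun r ⟨hr, hrr₀⟩ => ?_⟩
  have hsub : {x | φ x ≤ r / 2} ⊆ {x | 0 < φ x ∧ φ x < r} ∪ {x | φ x ≤ 0} := by
    intro x (hx : φ x ≤ r / 2)
    rcases lt_or_ge 0 (φ x) with hpos | hnonpos
    · exact Or.inl ⟨hpos, by linarith⟩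
    · exact Or.inr hnonpos
  calc ENNReal.ofReal (c * 2⁻¹ ^ β * r ^ β)
      = ENNReal.ofReal (c * (r / 2) ^ β) := by
        rw [div_eq_mul_inv, Real.mul_rpow hr.le (by norm_num), mul_assoc, mul_comm (r ^ β)]
    _ ≤ ν {x | φ x ≤ r / 2} := h ⟨by positivity, by linarith⟩
    _ ≤ ν {x | 0 < φ x ∧ φ x < r} :=
        (measure_mono hsub).trans ((measure_union_le _ _).trans_eq (by rw [hnull, add_zero]))

lemma tendsto_mul_rpow_div_sub_atTop {β c r₀ : ℝ} (hβ : 0 < β) (hc : 0 < c) (hr₀ : 0 < r₀) :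
    Tendsto (fun a => a * c * r₀ ^ (β - a) / (β - a)) (𝓝[<] β) atTop := by
  have hnum : Tendsto (fun a => a * c * r₀ ^ (β - a)) (𝓝[<] β) (𝓝 (β * c)) := by
    have : ContinuousAt (fun a => a * c * r₀ ^ (β - a)) β :=
      (continuousAt_id.mul continuousAt_const).mul
        ((Real.continuousAt_const_rpow hr₀.ne').comp (continuousAt_const.sub continuousAt_id))
    simpa using this.tendsto.mono_left nhdsWithin_le_nhds
  have hden : Tendsto (fun a => β - a) (𝓝[<] β) (𝓝[>] 0) := by
    refine tendsto_nhdsWithin_iff.2 ⟨?_, eventually_nhdsWithin_of_forall fun a (ha : a < β) =>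
      sub_pos.2 ha⟩
    simpa using ((continuous_sub_left β).tendsto β).mono_left nhdsWithin_le_nhds
  simpa only [div_eq_mul_inv, Function.comp_def] using
    hnum.pos_mul_atTop (by positivity) (tendsto_inv_nhdsGT_zero.comp hden)

theorem tendsto_integral_rpow_neg_atTop [IsFiniteMeasure ν] (hφ : 0 ≤ φ) (hφm : Measurable φ)
    {β : ℝ} (hβ : 0 < β)
    (hupper : ∀ b < β, ∀ᶠ r in 𝓝[>] 0, ν {x | φ x ≤ r} ≤ ENNReal.ofReal (r ^ b))
    (hlower : ∃ c > 0, ∀ᶠ r in 𝓝[>] 0, ENNReal.ofReal (c * r ^ β) ≤ ν {x | φ x ≤ r}) :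
    Tendsto (fun a => ∫ x, φ x ^ (-a) ∂ν) (𝓝[<] β) atTop := by
  obtain ⟨c, hc, hlower⟩ := hlower
  -- `Real.rpow` sets `0 ^ (-a) = 0`, so the points where `φ = 0` must be shown to be negligible.
  have hnull :=
    measure_setOf_nonpos_eq_zero_of_eventually_le_rpow (half_pos hβ) (hupper _ (half_lt_self hβ))
  obtain ⟨c', hc', r₀, hr₀, hlower⟩ := exists_ofReal_mul_rpow_le_measure_pos_lt hnull hc hlower
  refine tendsto_atTop_mono' _ ?_ (tendsto_mul_rpow_div_sub_atTop hβ hc' hr₀)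
  filter_upwards [Ioo_mem_nhdsLT hβ] with a ⟨ha, haβ⟩
  -- Needed because the Bochner integral of a non-integrable function is `0`.
  have hint : Integrable (fun x => φ x ^ (-a)) ν :=
    integrable_rpow_neg_of_eventually_measure_le hφ hφm ha
      (by linarith : a < (a + β) / 2) (hupper _ (by linarith))
  have hnonneg : 0 ≤ᵐ[ν] fun x => φ x ^ (-a) := ae_of_all _ fun x => Real.rpow_nonneg (hφ x) _
  rw [← ENNReal.ofReal_le_ofReal_iff (integral_nonneg_of_ae hnonneg),
    ofReal_integral_eq_lintegral_ofReal hint hnonneg]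
  exact ofReal_le_lintegral_rpow_neg hφ hφm ha haβ hc'.le hr₀ hlower

end NegativeMoments

section Content

variable {X : Type*} [MetricSpace X] [MeasurableSpace X] {d : ℕ} {μ ν : Measure X}

lemma ofReal_rpow_sub_eq_inv {r : ℝ} (hr : 0 < r) (s : ℝ) :
    ENNReal.ofReal (r ^ (s - d)) = (ENNReal.ofReal (r ^ (d - s)))⁻¹ := by
  rw [← ENNReal.ofReal_inv_of_pos (by positivity), ← Real.rpow_neg hr.le, neg_sub]

lemma upperContent_antitone : Antitone (upperContent d μ ν) := fun s s' hss' =>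
  limsup_le_limsup <| by
    filter_upwards [Ioo_mem_nhdsGT zero_lt_one] with r ⟨hr0, hr1⟩
    gcongr ENNReal.ofReal ?_ * _
    exact Real.rpow_le_rpow_of_exponent_ge hr0 hr1.le (by linarith)

lemma upperContent_eq_zero_of_upperBoxDim_lt [IsFiniteMeasure ν] {s : ℝ}
    (hs : upperBoxDim d μ ν < s) : upperContent d μ ν s = 0 := by
  have hne : {t : ℝ | 0 ≤ t ∧ upperContent d μ ν t = 0}.Nonempty :=
    ⟨d + 1, by positivity, upperContent_eq_zero_of_lt (by linarith)⟩
  obtain ⟨t, ⟨-, ht⟩, hts⟩ := (csInf_lt_iff ⟨0, fun t ht => ht.1⟩ hne).1 hs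
  exact nonpos_iff_eq_zero.1 (ht ▸ upperContent_antitone hts.le)

lemma eventually_measure_le_rpow_of_upperContent_eq_zero {s : ℝ}
    (h : upperContent d μ ν s = 0) :
    ∀ᶠ r in 𝓝[>] 0, ν {x | distM x μ ≤ r} ≤ ENNReal.ofReal (r ^ ((d : ℝ) - s)) := by
  have hlt : upperContent d μ ν s < 1 := h ▸ zero_lt_one
  filter_upwards [eventually_lt_of_limsup_lt hlt, self_mem_nhdsWithin] with r hr (hr0 : 0 < r)
  rw [ofReal_rpow_sub_eq_inv hr0] at hr
  simpa using (ENNReal.inv_mul_le_iff (by positivity) ENNReal.ofReal_ne_top).1 hr.le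

lemma exists_ofReal_mul_rpow_le_of_lowerContent_pos {s : ℝ} (h : 0 < lowerContent d μ ν s) :
    ∃ c > 0, ∀ᶠ r in 𝓝[>] 0,
      ENNReal.ofReal (c * r ^ ((d : ℝ) - s)) ≤ ν {x | distM x μ ≤ r} := by
  obtain ⟨c, -, hc0, hc⟩ := ENNReal.lt_iff_exists_real_btwn.1 h
  refine ⟨c, ENNReal.ofReal_pos.1 hc0, ?_⟩
  filter_upwards [eventually_lt_of_lt_liminf hc, self_mem_nhdsWithin] with r hr (hr0 : 0 < r)
  rw [ofReal_rpow_sub_eq_inv hr0] at hr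
  rw [ENNReal.ofReal_mul (ENNReal.ofReal_pos.1 hc0).le, mul_comm]
  exact (ENNReal.mul_le_iff_le_inv (by positivity) ENNReal.ofReal_ne_top).2 hr.le

end Content

theorem zeta_tendsto_atTop_at_box_dim_general
    (d : ℕ) (μ ν : Measure (EuclideanSpace ℝ (Fin d)))
    [IsFiniteMeasure ν]
    (D : ℝ) (hD' : upperBoxDim d μ ν = D)
    (hDd : D < d)
    (hpos : 0 < lowerContent d μ ν D) :
    Tendsto (fun s : ℝ => ∫ x, (distM x μ) ^ (s - d) ∂ν) (𝓝[>] D) atTop := by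
  have hupper (b : ℝ) (hb : b < d - D) :
      ∀ᶠ r in 𝓝[>] 0, ν {x | distM x μ ≤ r} ≤ ENNReal.ofReal (r ^ b) := by
    have h := eventually_measure_le_rpow_of_upperContent_eq_zero
      (upperContent_eq_zero_of_upperBoxDim_lt (s := d - b) (by linarith))
    rwa [sub_sub_cancel] at h
  have hmoments := tendsto_integral_rpow_neg_atTop (φ := fun x => distM x μ)
    (fun x => Metric.infDist_nonneg) (Metric.continuous_infDist_pt _).measurable (sub_pos.2 hDd)
    hupper (exists_ofReal_mul_rpow_le_of_lowerContent_pos hpos)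
  have hexp : Tendsto (fun s : ℝ => (d : ℝ) - s) (𝓝[>] D) (𝓝[<] (d - D)) :=
    tendsto_nhdsWithin_iff.2 ⟨((continuous_sub_left _).tendsto D).mono_left nhdsWithin_le_nhds,
      eventually_nhdsWithin_of_forall fun s (hs : D < s) => sub_lt_sub_left hs _⟩
  simpa only [Function.comp_def, neg_sub] using hmoments.comp hexp

theorem zeta_tendsto_atTop_at_box_dim
    (d : ℕ) (μ ν : Measure (EuclideanSpace ℝ (Fin d)))
    [IsProbabilityMeasure μ] [IsFiniteMeasure ν]
    (δ : ℝ) (hδ : 0 < δ)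
    (hspt : msupport ν ⊆ {x | distM x μ ≤ δ})
    (D : ℝ) (hD : lowerBoxDim d μ ν = D) (hD' : upperBoxDim d μ ν = D)
    (hDd : D < d)
    (hpos : 0 < lowerContent d μ ν D) :
    Tendsto (fun s : ℝ => ∫ x, (distM x μ) ^ (s - d) ∂ν) (𝓝[>] D) atTop :=
  zeta_tendsto_atTop_at_box_dim_general d μ ν D hD' hDd hpos
end

section
/- Given a Borel probability measure μ on ℝ^d and a finite Borel measure ν, for any 0 < δ_1 < δ_2 the difference h(s) := ζ_μ(s, ν^{μ,δ_2}) − ζ_μ(s, ν^{μ,δ_1}) of the relative distance zeta functions extends to an entire function of s ∈ ℂ. -/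
open MeasureTheory Filter Topology
open scoped ENNReal

/-- The `δ`-tubular-neighborhood measure of `μ` with respect to `ν`. -/
noncomputable def tubularMeasure {X : Type*} [MetricSpace X] [MeasurableSpace X]
    (ν μ : Measure X) (δ : ℝ) : Measure X :=
  ν.restrict {x | distM x μ ≤ δ}

/-- The relative distance zeta function of `μ` with respect to `ν` in ambient
dimension `d`. -/
noncomputable def distZeta {X : Type*} [MetricSpace X] [MeasurableSpace X]
    (d : ℕ) (μ ν : Measure X) (s : ℂ) : ℂ :=
  ∫ x, ((distM x μ : ℂ)) ^ (s - d) ∂ν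

/-! On the shell `{δ₁ < d(x, μ) ≤ δ₂}` the distance is bounded away from `0` and `∞`, so
`d(x, μ) ^ (s - d) = exp ((s - d) log d(x, μ))` with `log d(x, μ)` bounded. The difference of the
two zeta functions is the integral of this over the shell, i.e. a Laplace transform of a compactly
supported finite measure, and differentiating under the integral shows that it is entire. -/

section LaplaceTransform

variable {X : Type*} [MeasurableSpace X] {ρ : Measure X} [IsFiniteMeasure ρ]

theorem norm_cexp_mul_le {g s : ℂ} {M : ℝ} (hg : ‖g‖ ≤ M) :
    ‖Complex.exp (g * s)‖ ≤ Real.exp (M * ‖s‖) :=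
  calc ‖Complex.exp (g * s)‖ ≤ Real.exp ‖g * s‖ := Complex.norm_exp_le_exp_norm _
    _ ≤ Real.exp (M * ‖s‖) := by rw [norm_mul]; gcongr

theorem differentiable_integral_cexp_mul {g : X → ℂ} {M : ℝ} (hg : AEStronglyMeasurable g ρ)
    (hgM : ∀ᵐ x ∂ρ, ‖g x‖ ≤ M) :
    Differentiable ℂ fun s => ∫ x, Complex.exp (g x * s) ∂ρ := by
  intro s₀
  have hF_meas (s : ℂ) : AEStronglyMeasurable (fun x => Complex.exp (g x * s)) ρ :=
    Complex.continuous_exp.comp_aestronglyMeasurable (hg.mul_const s)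
  have hF_int : Integrable (fun x => Complex.exp (g x * s₀)) ρ :=
    (integrable_const (Real.exp (M * ‖s₀‖))).mono' (hF_meas s₀)
      (hgM.mono fun x hx => norm_cexp_mul_le hx)
  have h_bound : ∀ᵐ x ∂ρ, ∀ s ∈ Metric.ball s₀ 1,
      ‖g x * Complex.exp (g x * s)‖ ≤ M * Real.exp (M * (‖s₀‖ + 1)) := by
    filter_upwards [hgM] with x hx s hs
    have hM : 0 ≤ M := (norm_nonneg _).trans hx
    have hs' : ‖s‖ ≤ ‖s₀‖ + 1 := by
      have := norm_le_norm_add_norm_sub' s s₀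
      rw [Metric.mem_ball, dist_eq_norm] at hs
      linarith
    rw [norm_mul]
    gcongr
    exact (norm_cexp_mul_le hx).trans (by gcongr)
  have h_diff : ∀ᵐ x ∂ρ, ∀ s ∈ Metric.ball s₀ 1,
      HasDerivAt (fun s => Complex.exp (g x * s)) (g x * Complex.exp (g x * s)) s := by
    refine ae_of_all _ fun x s _ => ?_
    simpa [mul_comm] using ((hasDerivAt_id s).const_mul (g x)).cexp
  exact (hasDerivAt_integral_of_dominated_loc_of_deriv_le (Metric.ball_mem_nhds s₀ one_pos)
    (Eventually.of_forall hF_meas) hF_int (hg.mul (hF_meas s₀)) h_bound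
    (integrable_const _) h_diff).2.differentiableAt

end LaplaceTransform

theorem norm_log_ofReal_le_of_mem_Icc {a b r : ℝ} (ha : 0 < a) (hr : r ∈ Set.Icc a b) :
    ‖Complex.log r‖ ≤ max |Real.log a| |Real.log b| := by
  have hr₀ : 0 < r := ha.trans_le hr.1
  rw [← Complex.ofReal_log hr₀.le, Complex.norm_real, Real.norm_eq_abs]
  exact abs_le_max_abs_abs (Real.log_le_log ha hr.1) (Real.log_le_log hr₀ hr.2)

theorem integrableOn_ofReal_cpow_of_le {X : Type*} [MeasurableSpace X] {ν : Measure X}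
    [IsFiniteMeasure ν] {f : X → ℝ} (hf : Measurable f) (hf₀ : ∀ x, 0 ≤ f x) (δ : ℝ) {w : ℂ}
    (hw : 0 < w.re) : IntegrableOn (fun x => (f x : ℂ) ^ w) {x | f x ≤ δ} ν := by
  refine (integrable_const (δ ^ w.re)).mono'
    ((Complex.measurable_ofReal.comp hf).pow_const w).aestronglyMeasurable ?_
  filter_upwards [ae_restrict_mem (measurableSet_le hf measurable_const)] with x hx
  rw [Complex.norm_cpow_eq_rpow_re_of_nonneg (hf₀ x) hw.ne']
  exact Real.rpow_le_rpow (hf₀ x) hx hw.le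

section distM

variable {X : Type*} [MetricSpace X] [MeasurableSpace X] [BorelSpace X]

theorem measurable_distM (μ : Measure X) : Measurable fun x => distM x μ :=
  (Metric.continuous_infDist_pt _).measurable

theorem measurableSet_distM_le (μ : Measure X) (δ : ℝ) : MeasurableSet {x | distM x μ ≤ δ} :=
  measurableSet_le (measurable_distM μ) measurable_const

theorem distZeta_tubularMeasure_sub (d : ℕ) (μ ν : Measure X) [IsFiniteMeasure ν]
    {δ₁ δ₂ : ℝ} (h12 : δ₁ ≤ δ₂) {s : ℂ} (hs : (d : ℝ) < s.re) :
    distZeta d μ (tubularMeasure ν μ δ₂) s - distZeta d μ (tubularMeasure ν μ δ₁) s =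
      ∫ x in {x | distM x μ ≤ δ₂} \ {x | distM x μ ≤ δ₁}, (distM x μ : ℂ) ^ (s - d) ∂ν :=
  (setIntegral_sdiff (measurableSet_distM_le μ δ₁)
    (integrableOn_ofReal_cpow_of_le (measurable_distM μ) (fun _ => Metric.infDist_nonneg) δ₂
      (by simpa using hs)) fun _ hx => le_trans hx h12).symm

end distM

theorem zeta_difference_of_tubular_measures_entire_general
    (d : ℕ) (μ ν : Measure (EuclideanSpace ℝ (Fin d)))
    [IsFiniteMeasure ν]
    (δ₁ δ₂ : ℝ) (h1 : 0 < δ₁) (h12 : δ₁ < δ₂) :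
    ∃ H : ℂ → ℂ, Differentiable ℂ H ∧
      ∀ s : ℂ, (d : ℝ) < s.re →
        H s = distZeta d μ (tubularMeasure ν μ δ₂) s
                - distZeta d μ (tubularMeasure ν μ δ₁) s := by
  set A := {x | distM x μ ≤ δ₂} \ {x | distM x μ ≤ δ₁}
  have hA : MeasurableSet A := (measurableSet_distM_le μ δ₂).diff (measurableSet_distM_le μ δ₁)
  have hlog : ∀ᵐ x ∂ν.restrict A,
      ‖Complex.log (distM x μ)‖ ≤ max |Real.log δ₁| |Real.log δ₂| := by
    filter_upwards [ae_restrict_mem hA] with x ⟨hx₂, hx₁⟩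
    exact norm_log_ofReal_le_of_mem_Icc h1 ⟨(not_le.mp hx₁).le, hx₂⟩
  refine ⟨fun s => ∫ x in A, Complex.exp (Complex.log (distM x μ) * (s - d)) ∂ν,
    (differentiable_integral_cexp_mul
      (Complex.measurable_ofReal.comp (measurable_distM μ)).clog.aestronglyMeasurable
      hlog).comp (differentiable_id.sub_const _), fun s hs => ?_⟩
  rw [distZeta_tubularMeasure_sub d μ ν h12.le hs]
  refine setIntegral_congr_fun hA fun x ⟨_, hx₁⟩ => ?_
  have hx : (distM x μ : ℂ) ≠ 0 := Complex.ofReal_ne_zero.mpr (h1.trans (not_le.mp hx₁)).ne'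
  exact (Complex.cpow_def_of_ne_zero hx _).symm

theorem zeta_difference_of_tubular_measures_entire
    (d : ℕ) (μ ν : Measure (EuclideanSpace ℝ (Fin d)))
    [IsProbabilityMeasure μ] [IsFiniteMeasure ν]
    (δ₁ δ₂ : ℝ) (h1 : 0 < δ₁) (h12 : δ₁ < δ₂) :
    ∃ H : ℂ → ℂ, Differentiable ℂ H ∧
      ∀ s : ℂ, (d : ℝ) < s.re →
        H s = distZeta d μ (tubularMeasure ν μ δ₂) s
                - distZeta d μ (tubularMeasure ν μ δ₁) s :=
  zeta_difference_of_tubular_measures_entire_general d μ ν δ₁ δ₂ h1 h12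
end

section
/- If each μ_i is relatively Minkowski nondegenerate with respect to ν_i and the sup-norm Minkowski contents M_∞^{D_i}(μ_i, ν_i) exist (where D_i = dim_B(μ_i, ν_i)), then the sup-norm Minkowski content of the product exists in dimension D = Σ D_i and equals the product: M_∞^D(⊗μ_i, ⊗ν_i) = ∏_{i=1}^k M_∞^{D_i}(μ_i, ν_i). -/
open MeasureTheory Filter Topology
open scoped ENNReal

/-! The sup-norm distance from a point `x` of a product to a product `∏ Sᵢ` of nonempty sets is
`maxᵢ dist(xᵢ, Sᵢ)`, and the support of a product measure is the product of the supports. Hence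
the closed `δ`-tube around the support of `⊗ μᵢ` is the product of the `δ`-tubes around the
supports of the `μᵢ`, its `⊗ νᵢ`-measure is the product of their `νᵢ`-measures, and the
normalising factors `δ ^ (Dᵢ - dᵢ)` multiply as well. So for every `δ > 0` the normalised tube
volume of the product is exactly the product of those of the factors, and the limits multiply
because they are finite. -/

open Set Metric

theorem msupport_eq_support {X : Type*} [TopologicalSpace X] [MeasurableSpace X]
    (μ : Measure X) : msupport μ = μ.support := by
  ext x
  simp only [msupport, mem_ofPred_eq, Measure.mem_support_iff_forall, pos_iff_ne_zero]

noncomputable def tubeRatio {X : Type*} [MetricSpace X] [MeasurableSpace X]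
    (d : ℕ) (μ ν : Measure X) (s δ : ℝ) : ℝ≥0∞ :=
  ENNReal.ofReal (δ ^ (s - d)) * ν {x | distM x μ ≤ δ}

section Pi

variable {ι : Type*} [Fintype ι] {X : ι → Type*}

theorem MeasureTheory.Measure.support_pi [∀ i, TopologicalSpace (X i)]
    [∀ i, MeasurableSpace (X i)] (μ : ∀ i, Measure (X i)) [∀ i, SigmaFinite (μ i)] :
    (Measure.pi μ).support = univ.pi fun i => (μ i).support := by
  ext x
  simp only [Measure.mem_support_iff_forall, mem_univ_pi]
  constructor
  · intro hx i U hU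
    rw [pos_iff_ne_zero]
    exact fun hU0 => (hx _ ((continuous_apply i).continuousAt.preimage_mem_nhds hU)).ne'
      (Measure.pi_eval_preimage_null μ hU0)
  · intro hx U hU
    rw [nhds_pi, Filter.mem_pi] at hU
    obtain ⟨I, -, t, ht, htU⟩ := hU
    calc 0 < ∏ i, μ i (t i) :=
          pos_iff_ne_zero.2 <| Finset.prod_ne_zero_iff.2 fun i _ => (hx i _ (ht i)).ne'
      _ = Measure.pi μ (univ.pi t) := (Measure.pi_pi μ t).symm
      _ ≤ Measure.pi μ U :=
          measure_mono ((pi_mono' (fun _ _ => Subset.rfl) (subset_univ I)).trans htU)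

theorem Metric.infDist_univ_pi_le_iff [∀ i, PseudoMetricSpace (X i)] {s : ∀ i, Set (X i)}
    (hs : ∀ i, (s i).Nonempty) (x : ∀ i, X i) {δ : ℝ} (hδ : 0 ≤ δ) :
    infDist x (univ.pi s) ≤ δ ↔ ∀ i, infDist (x i) (s i) ≤ δ := by
  constructor
  · intro h i
    refine le_of_forall_pos_le_add fun ε hε => ?_
    obtain ⟨y, hy, hxy⟩ := (infDist_lt_iff (univ_pi_nonempty_iff.2 hs)).1
      (h.trans_lt (lt_add_of_pos_right δ hε))
    exact (infDist_le_dist_of_mem (hy i (mem_univ i))).trans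
      ((dist_le_pi_dist x y i).trans hxy.le)
  · intro h
    refine le_of_forall_pos_le_add fun ε hε => ?_
    choose y hy hxy using fun i =>
      (infDist_lt_iff (hs i)).1 ((h i).trans_lt (lt_add_of_pos_right δ hε))
    have hy_mem : y ∈ univ.pi s := fun i _ => hy i
    exact (infDist_le_dist_of_mem hy_mem).trans
      ((dist_pi_le_iff (by positivity)).2 fun i => (hxy i).le)

variable [∀ i, MetricSpace (X i)] [∀ i, MeasurableSpace (X i)]

theorem setOf_distM_pi_le [∀ i, HereditarilyLindelofSpace (X i)]
    (μ : ∀ i, Measure (X i)) [∀ i, SigmaFinite (μ i)] (hμ : ∀ i, μ i ≠ 0)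
    {δ : ℝ} (hδ : 0 ≤ δ) :
    {x | distM x (Measure.pi μ) ≤ δ} = univ.pi fun i => {t | distM t (μ i) ≤ δ} := by
  ext x
  simp only [distM, msupport_eq_support, Measure.support_pi, mem_ofPred_eq, mem_univ_pi]
  exact infDist_univ_pi_le_iff (fun i => Measure.nonempty_support (hμ i)) x hδ

theorem tubeRatio_pi [∀ i, HereditarilyLindelofSpace (X i)] (d : ι → ℕ)
    (μ ν : ∀ i, Measure (X i)) [∀ i, SigmaFinite (μ i)] [∀ i, SigmaFinite (ν i)]
    (hμ : ∀ i, μ i ≠ 0) (s : ι → ℝ) {δ : ℝ} (hδ : 0 < δ) :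
    tubeRatio (∑ i, d i) (Measure.pi μ) (Measure.pi ν) (∑ i, s i) δ =
      ∏ i, tubeRatio (d i) (μ i) (ν i) (s i) δ := by
  have hexp : (∑ i, s i) - ((∑ i, d i : ℕ) : ℝ) = ∑ i, (s i - d i) := by
    push_cast
    rw [Finset.sum_sub_distrib]
  rw [tubeRatio, hexp, Real.rpow_sum_of_pos hδ,
    ENNReal.ofReal_prod_of_nonneg fun i _ => Real.rpow_nonneg hδ.le _,
    setOf_distM_pi_le μ hμ hδ.le, Measure.pi_pi, ← Finset.prod_mul_distrib]
  rfl

end Pi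

theorem sup_norm_minkowski_content_of_product_general
    (k : ℕ) (d : Fin k → ℕ)
    (μ ν : ∀ i, Measure (Fin (d i) → ℝ))
    (hμ : ∀ i, IsProbabilityMeasure (μ i))
    (hν : ∀ i, IsFiniteMeasure (ν i))
    (D : Fin k → ℝ)
    (M : Fin k → ℝ≥0∞)
    (hMfin : ∀ i, M i < ∞)
    (hMlow : ∀ i, lowerContent (d i) (μ i) (ν i) (D i) = M i)
    (hMup : ∀ i, upperContent (d i) (μ i) (ν i) (D i) = M i) :
    lowerContent (∑ i, d i) (Measure.pi μ) (Measure.pi ν) (∑ i, D i) = ∏ i, M i ∧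
    upperContent (∑ i, d i) (Measure.pi μ) (Measure.pi ν) (∑ i, D i) = ∏ i, M i := by
  have hfactors : Tendsto (fun δ => ∏ i, tubeRatio (d i) (μ i) (ν i) (D i) δ) (𝓝[>] 0)
      (𝓝 (∏ i, M i)) :=
    ENNReal.tendsto_finsetProd_of_ne_top _
      (fun i _ => tendsto_of_liminf_eq_limsup (hMlow i) (hMup i)) fun i _ => (hMfin i).ne
  have hproduct : Tendsto (tubeRatio (∑ i, d i) (Measure.pi μ) (Measure.pi ν) (∑ i, D i))
      (𝓝[>] 0) (𝓝 (∏ i, M i)) :=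
    hfactors.congr' <| eventually_nhdsWithin_of_forall fun δ hδ =>
      (tubeRatio_pi d μ ν (fun i => (hμ i).ne_zero) D hδ).symm
  exact ⟨hproduct.liminf_eq, hproduct.limsup_eq⟩

theorem sup_norm_minkowski_content_of_product
    (k : ℕ) (d : Fin k → ℕ)
    (μ ν : ∀ i, Measure (Fin (d i) → ℝ))
    (hμ : ∀ i, IsProbabilityMeasure (μ i))
    (hν : ∀ i, IsFiniteMeasure (ν i))
    (D : Fin k → ℝ)
    (hD : ∀ i, lowerBoxDim (d i) (μ i) (ν i) = D i)
    (hD' : ∀ i, upperBoxDim (d i) (μ i) (ν i) = D i)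
    (M : Fin k → ℝ≥0∞)
    (hMpos : ∀ i, 0 < M i) (hMfin : ∀ i, M i < ∞)
    (hMlow : ∀ i, lowerContent (d i) (μ i) (ν i) (D i) = M i)
    (hMup : ∀ i, upperContent (d i) (μ i) (ν i) (D i) = M i) :
    lowerContent (∑ i, d i) (Measure.pi μ) (Measure.pi ν) (∑ i, D i) = ∏ i, M i ∧
    upperContent (∑ i, d i) (Measure.pi μ) (Measure.pi ν) (∑ i, D i) = ∏ i, M i :=
  sup_norm_minkowski_content_of_product_general k d μ ν hμ hν D M hMfin hMlow hMup
end
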